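/- arXiv:0806.4420 — 4 statements merged into one kernel-verified Lean document; each statement's English description precedes it below -/
import Mathlib

section
/- Let G = ⟨s₁,…,s_r⟩ be the free group of rank r and G ↷ᵀ (X,B,μ) a G-system. Let α and β be finite-entropy partitions such that α refines β, and let F ⊂ G be a finite, right-connected subset containing the identity e. Then α ∨ ⋁_{f∈F} T_f^{-1}β is a splitting of α. -/
open MeasureTheory Filter
open scoped ENNReal symmDiff

namespace Bowen

noncomputable section

/-- The free group of rank `r`. -/
abbrev FG (r : ℕ) := FreeGroup (Fin r)

/-- The generating set element corresponding to `(i, b)`: `sᵢ` if `b = true`,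
`sᵢ⁻¹` if `b = false`. -/
def gen {r : ℕ} (s : Fin r × Bool) : FG r :=
  cond s.2 (FreeGroup.of s.1) (FreeGroup.of s.1)⁻¹

/-- The symmetric generating set `S = {s₁^{±1},…,s_r^{±1}}`. -/
def Sset (r : ℕ) : Set (FG r) := Set.range (gen (r := r))

/-- The ball of radius `n` about the identity in the word metric of `(G,S)`. -/
def ball (r n : ℕ) : Set (FG r) := {g | FreeGroup.norm g ≤ n}

section Partitions

variable {X : Type*} [mX : MeasurableSpace X] {K L : Type*}

/-- Shannon entropy of the countable labeled partition `p` with respect to `μ`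
(in `ℝ≥0∞`, so that `H(p) < ∞` is meaningful). -/
def Hpart (μ : Measure X) (p : X → K) : ℝ≥0∞ :=
  ∑' k : K, ENNReal.ofReal (Real.negMulLog ((μ (p ⁻¹' {k})).toReal))

/-- The atom of the partition `p` containing `x`. -/
def atomOf (p : X → K) (x : X) : Set X := p ⁻¹' {p x}

/-- Conditional Shannon entropy of `p` given the sub-σ-algebra `m`:
`H(p|m) = ∫ -log( μ(A_x | m)(x) ) dμ(x)`. -/
def HpartC (μ : Measure X) (p : X → K) (m : MeasurableSpace X) : ℝ≥0∞ :=
  ∫⁻ x, ENNReal.ofReal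
    (- Real.log ((μ[(atomOf p x).indicator (fun _ => (1:ℝ)) | m]) x)) ∂μ

/-- Join of two labeled partitions. -/
def pjoin (p : X → K) (q : X → L) : X → K × L := fun x => (p x, q x)

/-- Pullback partition `T_g^{-1} p`. -/
def pull {r : ℕ} (T : FG r → X → X) (g : FG r) (p : X → K) : X → K :=
  fun x => p (T g x)

/-- The join `⋁_{q ∈ Q} T_q^{-1} p` over a set `Q ⊆ G`. -/
def powS {r : ℕ} (T : FG r → X → X) (p : X → K) (Q : Set (FG r)) : X → (Q → K) :=
  fun x q => p (T (q : FG r) x)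

/-- The join `p^n = ⋁_{g ∈ B(e,n)} T_g^{-1} p`. -/
def pow {r : ℕ} (T : FG r → X → X) (p : X → K) (n : ℕ) : X → (ball r n → K) :=
  powS T p (ball r n)

/-- The σ-algebra generated by the partition `p`. -/
def sAlg (p : X → K) : MeasurableSpace X := MeasurableSpace.comap p ⊤

/-- The smallest `G`-invariant σ-algebra containing the partition `p`. -/
def sAlgG {r : ℕ} (T : FG r → X → X) (p : X → K) : MeasurableSpace X :=
  ⨆ g : FG r, sAlg (pull T g p)

/-- The σ-algebra `⋁_{f ∈ Q} T_f^{-1} p` for a (possibly infinite) `Q ⊆ G`. -/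
def sAlgSet {r : ℕ} (T : FG r → X → X) (p : X → K) (Q : Set (FG r)) :
    MeasurableSpace X :=
  ⨆ f ∈ Q, sAlg (pull T f p)

/-- `F(T,α) = (1−2r)H(α) + ∑ᵢ H(α ∨ T_{sᵢ}^{-1}α)`. -/
def FF {r : ℕ} (T : FG r → X → X) (μ : Measure X) (p : X → K) : ℝ :=
  (1 - 2 * (r : ℝ)) * (Hpart μ p).toReal
    + ∑ i : Fin r, (Hpart μ (pjoin p (pull T (FreeGroup.of i) p))).toReal

/-- `f(T,α) = inf_{n>0} F(T,α^n)`, as an extended real. -/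
def littleF {r : ℕ} (T : FG r → X → X) (μ : Measure X) (p : X → K) : EReal :=
  ⨅ n : ℕ, ((FF T μ (pow T p (n + 1)) : ℝ) : EReal)

/-- Conditional version `F(T,α|𝓕) = (1−2r)H(α|𝓕) + ∑ᵢ H(α ∨ T_{sᵢ}^{-1}α|𝓕)`. -/
def FFc {r : ℕ} (T : FG r → X → X) (μ : Measure X) (m : MeasurableSpace X)
    (p : X → K) : ℝ :=
  (1 - 2 * (r : ℝ)) * (HpartC (mX := mX) μ p m).toReal
    + ∑ i : Fin r, (HpartC (mX := mX) μ (pjoin p (pull T (FreeGroup.of i) p)) m).toReal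

/-- Conditional `f(T,α|𝓕) = inf_{n>0} F(T,α^n|𝓕)`. -/
def littleFc {r : ℕ} (T : FG r → X → X) (μ : Measure X) (m : MeasurableSpace X)
    (p : X → K) : EReal :=
  ⨅ n : ℕ, ((FFc (mX := mX) T μ m (pow T p (n + 1)) : ℝ) : EReal)

/-- The mean entropy `h(T_s, α) = lim_n H(⋁_{i=0}^n T_s^{-i}α)/(n+1)`; since the
sequence is subadditive the limit equals the infimum, which we take as the
definition. -/
def hrate {r : ℕ} (T : FG r → X → X) (μ : Measure X) (s : FG r) (p : X → K) : ℝ :=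
  ⨅ n : ℕ, (Hpart μ (fun x (i : Fin (n + 1)) => p (T (s ^ (i : ℕ)) x))).toReal / (n + 1)

/-- Conditional mean entropy `h(T_s, α|𝓕) = lim_n H(⋁_{i=0}^n T_s^{-i}α | 𝓕)/(n+1)`;
for an invariant `𝓕` the sequence is subadditive so the limit equals the infimum. -/
def hrateC {r : ℕ} (T : FG r → X → X) (μ : Measure X) (m : MeasurableSpace X)
    (s : FG r) (p : X → K) : ℝ :=
  ⨅ n : ℕ, (HpartC (mX := mX) μ (fun x (i : Fin (n + 1)) => p (T (s ^ (i : ℕ)) x)) m).toReal / (n + 1)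

/-- `F_*(T,α) = (1−r)H(α) + ∑ᵢ h(T_{sᵢ},α)`. -/
def Fstar {r : ℕ} (T : FG r → X → X) (μ : Measure X) (p : X → K) : ℝ :=
  (1 - (r : ℝ)) * (Hpart μ p).toReal + ∑ i : Fin r, hrate T μ (FreeGroup.of i) p

/-- `f_*(T,α) = inf_{n>0} F_*(T,α^n)`. -/
def fstar {r : ℕ} (T : FG r → X → X) (μ : Measure X) (p : X → K) : EReal :=
  ⨅ n : ℕ, ((Fstar T μ (pow T p (n + 1)) : ℝ) : EReal)

/-- `F_*(T,α|𝓕) = (1−r)H(α|𝓕) + ∑ᵢ h(T_{sᵢ},α|𝓕)`. -/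
def FstarC {r : ℕ} (T : FG r → X → X) (μ : Measure X) (m : MeasurableSpace X)
    (p : X → K) : ℝ :=
  (1 - (r : ℝ)) * (HpartC (mX := mX) μ p m).toReal + ∑ i : Fin r, hrateC (mX := mX) T μ m (FreeGroup.of i) p

/-- `f_*(T,α|𝓕) = inf_{n>0} F_*(T,α^n|𝓕)`. -/
def fstarC {r : ℕ} (T : FG r → X → X) (μ : Measure X) (m : MeasurableSpace X)
    (p : X → K) : EReal :=
  ⨅ n : ℕ, ((FstarC (mX := mX) T μ m (pow T p (n + 1)) : ℝ) : EReal)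

/-- `p` refines `q`: each atom of `p` is contained, up to a `μ`-null set,
in an atom of `q`. -/
def Refines (μ : Measure X) (p : X → K) (q : X → L) : Prop :=
  ∀ k : K, ∃ l : L, μ (p ⁻¹' {k} \ q ⁻¹' {l}) = 0

/-- Two labeled partitions are equal as partitions (up to null sets). -/
def PartEquiv (μ : Measure X) (p : X → K) (q : X → L) : Prop :=
  Refines μ p q ∧ Refines μ q p

/-- `σ` is a simple splitting of `p`: `σ = p ∨ T_s^{-1}β` for some `s ∈ S` and
some coarsening `β` of `p`. -/
def SimpleSplit {r : ℕ} (μ : Measure X) (T : FG r → X → X) (p σ : X → ℕ) : Prop :=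
  ∃ s ∈ Sset r, ∃ β : X → ℕ, Measurable β ∧ Refines μ p β ∧
    PartEquiv μ σ (pjoin p (pull T s β))

/-- `τ` is a splitting of `p`: obtained from `p` by a finite sequence of simple
splittings (as a partition, i.e. up to relabeling and null sets). -/
def IsSplitting {r : ℕ} (μ : Measure X) (T : FG r → X → X) (p : X → ℕ)
    (τ : X → K) : Prop :=
  ∃ σ : X → ℕ, Relation.ReflTransGen (SimpleSplit μ T) p σ ∧ PartEquiv μ σ τ

/-- A partition is generating if the smallest `G`-invariant σ-algebra containing it
is the full σ-algebra up to `μ`-null sets. -/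
def Generating {r : ℕ} (T : FG r → X → X) (μ : Measure X) (p : X → K) : Prop :=
  ∀ A : Set X, MeasurableSet A →
    ∃ A' : Set X, MeasurableSet[sAlgG T p] A' ∧ μ (A ∆ A') = 0

/-- The Rohlin distance `d(α,β) = H(α|β) + H(β|α)`. -/
def rohlinDist (μ : Measure X) (p : X → K) (q : X → L) : ℝ :=
  (HpartC μ p (sAlg q)).toReal + (HpartC μ q (sAlg p)).toReal

end Partitions

/-- Adjacency in the left Cayley graph `Γ_L`: an edge joins `a` and `sa`, `s ∈ S`. -/
def adjL {r : ℕ} (a b : FG r) : Prop := ∃ s ∈ Sset r, b = s * a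

/-- `Past(g₁;g₂)`: the set of `f ∈ G` such that every path in the left Cayley
graph from `f` to `g₁` passes through `g₂`. -/
def Past {r : ℕ} (g₁ g₂ : FG r) : Set (FG r) :=
  {f | ∀ l : List (FG r), l ≠ [] → l.head? = some f → l.getLast? = some g₁ →
        l.Chain' adjL → g₂ ∈ l}

/-- A subset `F ⊆ G` is right-connected: the subgraph of the right Cayley graph
induced on `F` is connected. -/
def RightConnected {r : ℕ} (F : Set (FG r)) : Prop :=
  ∀ g ∈ F, ∀ h ∈ F,
    Relation.ReflTransGen (fun a b => a ∈ F ∧ b ∈ F ∧ ∃ s ∈ Sset r, b = a * s) g h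

/-- A subset `F ⊆ G` is left-connected: the subgraph of the left Cayley graph
induced on `F` is connected. -/
def LeftConnected {r : ℕ} (F : Set (FG r)) : Prop :=
  ∀ g ∈ F, ∀ h ∈ F,
    Relation.ReflTransGen (fun a b => a ∈ F ∧ b ∈ F ∧ ∃ s ∈ Sset r, b = s * a) g h

section Markov

variable {X : Type*} [MeasurableSpace X] {K : Type*}

/-- A `G`-process `(T,X,μ,α)` is Markov: for every `s ∈ S`, `g ∈ G` and every atom
`A` of `α`, `μ(T_{sg}^{-1}A | ⋁_{f∈Past(sg;g)} T_f^{-1}α) = μ(T_{sg}^{-1}A | T_g^{-1}α)`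
almost everywhere. -/
def IsMarkov {r : ℕ} (μ : Measure X) (T : FG r → X → X) (p : X → K) : Prop :=
  ∀ s ∈ Sset r, ∀ g : FG r, ∀ k : K,
    (μ[((pull T (s * g) p) ⁻¹' {k}).indicator (fun _ => (1:ℝ)) |
        sAlgSet T p (Past (s * g) g)])
      =ᵐ[μ]
    (μ[((pull T (s * g) p) ⁻¹' {k}).indicator (fun _ => (1:ℝ)) |
        sAlg (pull T g p)])

end Markov


section ExtraDefs

/-- The distance `d₁` between two ordered processes:
`∑_{s∈S} ∑_{i,j} |μ(A_i ∩ T_s^{-1}A_j) − ν(B_i ∩ U_s^{-1}B_j)|`. -/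
def d1 {X Y : Type*} [MeasurableSpace X] [MeasurableSpace Y] {r : ℕ}
    (T : FG r → X → X) (μ : Measure X) (α : X → ℕ)
    (U : FG r → Y → Y) (ν : Measure Y) (β : Y → ℕ) : ℝ :=
  ∑ i : Fin r, ∑ b : Bool,
    ∑' ij : ℕ × ℕ,
      |(μ (α ⁻¹' {ij.1} ∩ pull T (gen (i, b)) α ⁻¹' {ij.2})).toReal -
        (ν (β ⁻¹' {ij.1} ∩ pull U (gen (i, b)) β ⁻¹' {ij.2})).toReal|

/-- Isomorphism of ordered processes: a measure conjugacy between conull sets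
intertwining the actions and carrying the `i`-th atom to the `i`-th atom. -/
def OrderedIso {X Y : Type*} [MeasurableSpace X] [MeasurableSpace Y] {r : ℕ}
    (T : FG r → X → X) (μ : Measure X) (α : X → ℕ)
    (U : FG r → Y → Y) (ν : Measure Y) (β : Y → ℕ) : Prop :=
  ∃ (X' : Set X) (Y' : Set Y) (φ : X → Y) (ψ : Y → X),
    MeasurableSet X' ∧ MeasurableSet Y' ∧ μ X'ᶜ = 0 ∧ ν Y'ᶜ = 0 ∧
    Measurable φ ∧ Measurable ψ ∧ Set.MapsTo φ X' Y' ∧ Set.MapsTo ψ Y' X' ∧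
    (∀ x ∈ X', ψ (φ x) = x) ∧ (∀ y ∈ Y', φ (ψ y) = y) ∧
    Measure.map φ μ = ν ∧
    (∀ (g : FG r), ∀ x ∈ X', φ (T g x) = U g (φ x)) ∧
    (∀ x ∈ X', β (φ x) = α x)

/-- A transition system for `(G,S)`: a family of `K × K` matrices indexed by the
generating set together with a row vector, written as functions. -/
structure TransSys (r : ℕ) (K : Type*) where
  P : Fin r × Bool → K → K → ℝ
  pi : K → ℝ

/-- The transition system is an invariant transition system: the `P^s` are
stochastic matrices, `π` is a probability vector which is a steady state vector
for every `P^s`, and `π_i P^{s^{-1}}_{ij} = π_j P^s_{ji}`. -/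
def TransSys.IsInvariant {r : ℕ} {K : Type*} (ts : TransSys r K) : Prop :=
  (∀ s i j, 0 ≤ ts.P s i j) ∧ (∀ s i, HasSum (ts.P s i) 1) ∧
    (∀ i, 0 ≤ ts.pi i) ∧ HasSum ts.pi 1 ∧
    (∀ s j, HasSum (fun i => ts.pi i * ts.P s i j) (ts.pi j)) ∧
    (∀ s i j, ts.pi i * ts.P (s.1, !s.2) i j = ts.pi j * ts.P s j i)

/-- The canonical (shift) action of `G` on `K^G`: `(T_g x)(f) = x(fg)`. -/
def shiftT {r : ℕ} {K : Type*} : FG r → (FG r → K) → (FG r → K) :=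
  fun g x f => x (f * g)

/-- `μ` is (a measure) induced by the transition system `ts`: the time-`e`
distribution is `π` and the transition probabilities into the complement of the
past are given by the matrices `P^s`.  (Note `T_g^{-1}A_k = {x : x(g) = k}`;
the conditional equalities `μ(A|B) = c` are recorded in the equivalent product
form `μ(A ∩ B) = c·μ(B)`.) -/
def IsInducedBy {r : ℕ} {K : Type*} [MeasurableSpace K]
    (μ : Measure (FG r → K)) (ts : TransSys r K) : Prop :=
  (∀ k : K, μ {x | x 1 = k} = ENNReal.ofReal (ts.pi k)) ∧
  ∀ (s : Fin r × Bool) (g : FG r),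
    FreeGroup.norm (gen s * g) = FreeGroup.norm g + 1 →
    ∀ (n : ℕ) (fs : Fin n → FG r) (ks : Fin n → K) (k₀ k : K),
      (∀ i, fs i ∈ Past (gen s * g) g ∧ fs i ≠ g) →
      (μ ({x | x (gen s * g) = k} ∩ ({x | x g = k₀} ∩ ⋂ i, {x | x (fs i) = ks i}))
          = ENNReal.ofReal (ts.P s k₀ k) * μ ({x | x g = k₀} ∩ ⋂ i, {x | x (fs i) = ks i})) ∧
      μ ({x | x (gen s * g) = k} ∩ {x | x g = k₀})
          = ENNReal.ofReal (ts.P s k₀ k) * μ {x | x g = k₀}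

end ExtraDefs

section AuxLemmas

variable {X : Type*} [MeasurableSpace X] {K L M : Type*} {μ : Measure X}

lemma refines_of_comp (φ : K → L) {p : X → K} {q : X → L} (h : ∀ x, q x = φ (p x)) :
    Refines μ p q := by
  intro k
  refine ⟨φ k, ?_⟩
  have he : p ⁻¹' {k} \ q ⁻¹' {φ k} = ∅ := by
    ext x
    simp only [Set.mem_diff, Set.mem_preimage, Set.mem_singleton_iff,
      Set.mem_empty_iff_false, iff_false, not_and, not_not]
    intro hx
    rw [h x, hx]
  rw [he]
  exact measure_empty

lemma refines_trans {p : X → K} {q : X → L} {t : X → M}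
    (h1 : Refines μ p q) (h2 : Refines μ q t) : Refines μ p t := by
  intro k
  obtain ⟨l, hl⟩ := h1 k
  obtain ⟨m, hm⟩ := h2 l
  refine ⟨m, measure_mono_null ?_ (measure_union_null hl hm)⟩
  intro x hx
  simp only [Set.mem_diff, Set.mem_preimage, Set.mem_singleton_iff, Set.mem_union] at hx ⊢
  by_cases hq : q x = l
  · exact Or.inr ⟨hq, hx.2⟩
  · exact Or.inl ⟨hx.1, hq⟩

lemma refines_pjoin_left {p : X → K} {q : X → L} {t : X → M}
    (h : Refines μ p q) : Refines μ (pjoin p t) (pjoin q t) := by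
  intro k
  obtain ⟨l, hl⟩ := h k.1
  refine ⟨(l, k.2), measure_mono_null ?_ hl⟩
  intro x hx
  simp only [Set.mem_diff, Set.mem_preimage, Set.mem_singleton_iff, pjoin, Prod.ext_iff] at hx ⊢
  refine ⟨hx.1.1, fun hql => hx.2 ⟨hql, hx.1.2⟩⟩

lemma partEquiv_trans {p : X → K} {q : X → L} {t : X → M}
    (h1 : PartEquiv μ p q) (h2 : PartEquiv μ q t) : PartEquiv μ p t :=
  ⟨refines_trans h1.1 h2.1, refines_trans h2.2 h1.2⟩

lemma partEquiv_of_comps (φ : K → L) (ψ : L → K) {p : X → K} {q : X → L}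
    (h1 : ∀ x, q x = φ (p x)) (h2 : ∀ x, p x = ψ (q x)) : PartEquiv μ p q :=
  ⟨refines_of_comp φ h1, refines_of_comp ψ h2⟩

lemma partEquiv_pjoin_left {p : X → K} {q : X → L} {t : X → M}
    (h : PartEquiv μ p q) : PartEquiv μ (pjoin p t) (pjoin q t) :=
  ⟨refines_pjoin_left h.1, refines_pjoin_left h.2⟩

end AuxLemmas

lemma good_insert {r : ℕ} {X : Type*} [MeasurableSpace X]
    (μ : Measure X) (T : FG r → X → X)
    (hTmul : ∀ g h : FG r, T (g * h) = T g ∘ T h)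
    (hTm : ∀ g : FG r, Measurable (T g))
    (α β : X → ℕ) (hβm : Measurable β)
    (A : Finset (FG r)) (a : FG r) (ha : a ∈ A) (s : FG r) (hs : s ∈ Sset r)
    (hGood : IsSplitting μ T α (fun x => (α x, fun f : A => β (T (f : FG r) x)))) :
    IsSplitting μ T α
      (fun x => (α x, fun f : (insert (a * s) A : Finset (FG r)) => β (T (f : FG r) x))) := by
  classical
  obtain ⟨σ, hchain, hpe⟩ := hGood
  set τA : X → ℕ × (A → ℕ) := fun x => (α x, fun f : A => β (T (f : FG r) x)) with hτA
  set c : X → ℕ := fun x => β (T (a * s) x) with hc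
  have hcs : pull T s (pull T a β) = c := by
    funext x
    show β (T a (T s x)) = β (T (a * s) x)
    rw [hTmul a s]
    rfl
  set σ' : X → ℕ := fun x => Nat.pair (σ x) (c x) with hσ'
  have h1 : PartEquiv μ σ' (pjoin σ c) :=
    partEquiv_of_comps Nat.unpair (fun z : ℕ × ℕ => Nat.pair z.1 z.2)
      (fun x => (Nat.unpair_pair _ _).symm) (fun x => rfl)
  have hstep : SimpleSplit μ T σ σ' := by
    refine ⟨s, hs, pull T a β, hβm.comp (hTm a), ?_, ?_⟩
    · exact refines_trans hpe.1
        (refines_of_comp (fun z : ℕ × (A → ℕ) => z.2 ⟨a, ha⟩) (fun x => rfl))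
    · rw [hcs]
      exact h1
  refine ⟨σ', hchain.tail hstep, ?_⟩
  have h2 : PartEquiv μ (pjoin σ c) (pjoin τA c) := partEquiv_pjoin_left hpe
  have h3 : PartEquiv μ (pjoin τA c)
      (fun x => (α x, fun f : (insert (a * s) A : Finset (FG r)) => β (T (f : FG r) x))) := by
    refine partEquiv_of_comps
      (fun z : (ℕ × (A → ℕ)) × ℕ =>
        (z.1.1, fun f : (insert (a * s) A : Finset (FG r)) =>
          if hf : (f : FG r) ∈ A then z.1.2 ⟨f, hf⟩ else z.2))
      (fun z : ℕ × ((insert (a * s) A : Finset (FG r)) → ℕ) =>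
        ((z.1, fun f : A => z.2 ⟨f, Finset.mem_insert_of_mem f.2⟩),
          z.2 ⟨a * s, Finset.mem_insert_self _ _⟩))
      ?_ ?_
    · intro x
      refine Prod.ext rfl ?_
      funext f
      by_cases hf : (f : FG r) ∈ A
      · simp [hf, τA, pjoin]
      · have hfb : (f : FG r) = a * s := by
          rcases Finset.mem_insert.1 f.2 with h | h
          · exact h
          · exact absurd h hf
        simp [hf, hfb, τA, pjoin, c]
    · intro x
      rfl
  exact partEquiv_trans (partEquiv_trans h1 h2) h3

/-- if `α` refines `β` and `F ⊆ G` is finite, right-connected and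
contains the identity, then `α ∨ ⋁_{f∈F} T_f^{-1}β` is a splitting of `α`. -/
theorem stmt_3 {r : ℕ} (hr : 1 ≤ r) {X : Type*} [MeasurableSpace X] [StandardBorelSpace X]
    (μ : Measure X) [IsProbabilityMeasure μ]
    (T : FG r → X → X) (hT1 : T 1 = id)
    (hTmul : ∀ g h : FG r, T (g * h) = T g ∘ T h)
    (hTmp : ∀ g : FG r, MeasurePreserving (T g) μ μ)
    (α β : X → ℕ) (hαm : Measurable α) (hβm : Measurable β)
    (hHα : Hpart μ α < ⊤) (hHβ : Hpart μ β < ⊤)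
    (href : Refines μ α β)
    (F : Set (FG r)) (hFfin : F.Finite) (hFconn : RightConnected F)
    (hFe : (1 : FG r) ∈ F) :
    IsSplitting μ T α (fun x => (α x, fun f : F => β (T (f : FG r) x))) := by
  classical
  have hTm : ∀ g : FG r, Measurable (T g) := fun g => (hTmp g).measurable
  set F' : Finset (FG r) := hFfin.toFinset with hF'
  have hmemF' : ∀ g : FG r, g ∈ F' ↔ g ∈ F := fun g => hFfin.mem_toFinset
  -- base case: the singleton `{1}`
  have hGood1 : IsSplitting μ T α
      (fun x => (α x, fun f : ({1} : Finset (FG r)) => β (T (f : FG r) x))) := by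
    refine ⟨α, Relation.ReflTransGen.refl, ?_, ?_⟩
    · intro k
      obtain ⟨l, hl⟩ := href k
      refine ⟨(k, fun _ => l), measure_mono_null ?_ hl⟩
      intro x hx
      simp only [Set.mem_diff, Set.mem_preimage, Set.mem_singleton_iff] at hx ⊢
      obtain ⟨hk, hne⟩ := hx
      refine ⟨hk, fun hb => hne ?_⟩
      refine Prod.ext hk ?_
      funext f
      have hf1 : (f : FG r) = 1 := Finset.mem_singleton.1 f.2
      show β (T (f : FG r) x) = l
      rw [hf1, hT1]
      exact hb
    · exact refines_of_comp Prod.fst (fun x => rfl)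
  -- crossing lemma
  have cross : ∀ (A : Finset (FG r)) (x y : FG r),
      Relation.ReflTransGen
        (fun a b => a ∈ F ∧ b ∈ F ∧ ∃ s ∈ Sset r, b = a * s) x y →
      x ∈ A → y ∉ A →
      ∃ a b, a ∈ A ∧ b ∉ A ∧ b ∈ F ∧ ∃ s ∈ Sset r, b = a * s := by
    intro A x y hxy
    induction hxy with
    | refl => intro hx hy; exact absurd hx hy
    | @tail b cc hxb hbc ihc =>
      intro hx hcc
      by_cases hb : b ∈ A
      · exact ⟨b, cc, hb, hcc, hbc.2.1, hbc.2.2⟩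
      · exact ihc hx hb
  -- induction on the number of missing elements
  have key : ∀ n : ℕ, ∀ A : Finset (FG r), A ⊆ F' → (1 : FG r) ∈ A →
      F'.card - A.card ≤ n →
      IsSplitting μ T α (fun x => (α x, fun f : A => β (T (f : FG r) x))) →
      IsSplitting μ T α (fun x => (α x, fun f : F' => β (T (f : FG r) x))) := by
    intro n
    induction n with
    | zero =>
      intro A hAF h1A hcard hGA
      have hAeq : A = F' :=
        Finset.eq_of_subset_of_card_le hAF (Nat.le_of_sub_eq_zero (Nat.le_zero.1 hcard))
      exact hAeq ▸ hGA
    | succ n ih =>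
      intro A hAF h1A hcard hGA
      by_cases hFA : F' ⊆ A
      · have hAeq : A = F' := Finset.Subset.antisymm hAF hFA
        exact hAeq ▸ hGA
      · obtain ⟨g, hgF, hgA⟩ := Finset.not_subset.1 hFA
        have hpath := hFconn 1 hFe g ((hmemF' g).1 hgF)
        obtain ⟨a, b, haA, hbA, hbF, s, hsS, hbs⟩ := cross A 1 g hpath h1A hgA
        subst hbs
        have hGA' := good_insert μ T hTmul hTm α β hβm A a haA s hsS hGA
        refine ih (insert (a * s) A) ?_ (Finset.mem_insert_of_mem h1A) ?_ hGA'
        · exact Finset.insert_subset ((hmemF' _).2 hbF) hAF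
        · rw [Finset.card_insert_of_notMem hbA]
          omega
  have hGF' := key F'.card {1}
    (Finset.singleton_subset_iff.2 ((hmemF' 1).2 hFe))
    (Finset.mem_singleton_self 1) (Nat.sub_le _ _) hGood1
  obtain ⟨σ, hchain, hpe⟩ := hGF'
  refine ⟨σ, hchain, partEquiv_trans hpe ?_⟩
  exact partEquiv_of_comps
    (fun z : ℕ × (F' → ℕ) => (z.1, fun f : F => z.2 ⟨f, (hmemF' f).2 f.2⟩))
    (fun z : ℕ × (F → ℕ) => (z.1, fun f : F' => z.2 ⟨f, (hmemF' f).1 f.2⟩))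
    (fun x => rfl) (fun x => rfl)

end

end Bowen
end

section
/- Let G = ⟨s₁,…,s_r⟩ be the free group of rank r, let ({P^s}_{s∈S}, π) be an invariant transition system with state space K, and let μ be a Borel probability measure on K^G induced by this transition system. Let F ⊂ G be a finite left-connected set containing the identity id, let z : F → K, and let C = {x ∈ K^G : x(g) = z(g) for all g ∈ F} be the corresponding cylinder set. Let E(F) be the set of edges e of the left Cayley graph with both endpoints in F, directed from the endpoint e₋ closer to the identity to the other endpoint e₊, and for e ∈ E(F) with e₊ = s e₋ (s ∈ S) set p_z(e) = P^s_{z(e₋),z(e₊)}. Then μ(C) = π_{z(id)} · ∏_{e∈E(F)} p_z(e). -/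
open MeasureTheory Filter
open scoped ENNReal symmDiff

namespace Bowen

noncomputable section

/-!
Induct on `#F`. In the left Cayley graph the distance from `x` to `y` is `|x y⁻¹|`, and the graph
is a tree. An element `h = s g` of `F` of maximal length, with `|h| = |g| + 1`, is a leaf of the
subtree spanned by `F`: its only neighbour in `F` is its parent `g`, so `F \ {h}` is still
left-connected. Deleting the edge `{g, h}` splits `G` into the points closer to `h` and those
closer to `g`. Maximality puts `F \ {h}` on the `g`-side, and a path from the `g`-side to the
`h`-side can only cross at `g`, so `F \ {h} ⊆ Past(h; g)`. The defining property of `μ` gives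
`μ(C_F) = P^s_{z(g) z(h)} μ(C_{F \ {h}})`, and `(g, s)` is the one edge of `E(F)` not in
`E(F \ {h})`.
-/

section FreeGroupWords

open FreeGroup

variable {α : Type*} [DecidableEq α]

lemma _root_.FreeGroup.toWord_mul_of_norm_mul_eq {x y : FreeGroup α}
    (h : (x * y).norm = x.norm + y.norm) : (x * y).toWord = x.toWord ++ y.toWord :=
  (toWord_mul_sublist x y).eq_of_length (by simpa [FreeGroup.norm] using h)

lemma _root_.FreeGroup.norm_mul_mul_of_norm_mul_eq {u a v : FreeGroup α} (ha : a ≠ 1)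
    (hua : (u * a).norm = u.norm + a.norm) (hav : (a * v).norm = a.norm + v.norm) :
    (u * a * v).norm = u.norm + a.norm + v.norm := by
  have hred : IsReduced (u.toWord ++ a.toWord ++ v.toWord) := by
    refine IsReduced.append_overlap ?_ ?_ (by simpa using ha)
    · rw [← toWord_mul_of_norm_mul_eq hua]; exact isReduced_toWord
    · rw [← toWord_mul_of_norm_mul_eq hav]; exact isReduced_toWord
  have hword : (u * a * v).toWord = u.toWord ++ a.toWord ++ v.toWord := by
    rw [toWord_mul, toWord_mul_of_norm_mul_eq hua, hred.reduce_eq]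
  simp [FreeGroup.norm, hword, add_assoc]

end FreeGroupWords

section Generators

open FreeGroup

variable {r : ℕ}

lemma toWord_gen (s : Fin r × Bool) : (gen s).toWord = [s] := by
  rcases s with ⟨i, _ | _⟩ <;> simp [gen, toWord_inv, toWord_of, invRev]

lemma gen_injective : Function.Injective (gen (r := r)) := fun s t hst => by
  simpa [toWord_gen] using congrArg toWord hst

lemma norm_gen (s : Fin r × Bool) : (gen s).norm = 1 := by
  simp [FreeGroup.norm, toWord_gen]

lemma gen_ne_one (s : Fin r × Bool) : gen s ≠ 1 := fun h => by
  simpa [h] using norm_gen s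

lemma inv_gen (s : Fin r × Bool) : (gen s)⁻¹ = gen (s.1, !s.2) := by
  rcases s with ⟨i, _ | _⟩ <;> simp [gen]

lemma norm_gen_mul_eq_or (s : Fin r × Bool) (x : FG r) :
    (gen s * x).norm = x.norm + 1 ∨ (gen s * x).norm + 1 = x.norm := by
  rw [FreeGroup.norm, FreeGroup.norm, toWord_mul, toWord_gen, List.singleton_append, reduce.cons,
    reduce_toWord]
  rcases x.toWord with _ | ⟨a, w⟩
  · simp
  · dsimp only
    split_ifs <;> simp

lemma norm_mul_gen_eq_or (x : FG r) (s : Fin r × Bool) :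
    (x * gen s).norm = x.norm + 1 ∨ (x * gen s).norm + 1 = x.norm := by
  rw [← norm_inv_eq, mul_inv_rev, ← norm_inv_eq (x := x), inv_gen]
  exact norm_gen_mul_eq_or _ _

lemma exists_gen_mul_eq_of_ne_one {h : FG r} (hh : h ≠ 1) :
    ∃ s g, h = gen s * g ∧ (gen s * g).norm = g.norm + 1 := by
  rcases hw : h.toWord with _ | ⟨a, w⟩
  · exact absurd (toWord_eq_nil_iff.1 hw) hh
  have hw' : (mk w).toWord = w := by
    rw [toWord_mk]
    exact ((hw ▸ isReduced_toWord (x := h)).infix (List.suffix_cons a w).isInfix).reduce_eq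
  have hmul : gen a * mk w = h := by
    rw [← mk_toWord (x := gen a), toWord_gen, mul_mk, ← mk_toWord (x := h), hw]
    rfl
  refine ⟨a, mk w, hmul.symm, ?_⟩
  rw [hmul, FreeGroup.norm, FreeGroup.norm, hw, hw', List.length_cons]

lemma adjL.symm {a b : FG r} (hab : adjL a b) : adjL b a := by
  obtain ⟨_, ⟨t, rfl⟩, rfl⟩ := hab
  exact ⟨gen (t.1, !t.2), ⟨_, rfl⟩, by rw [← inv_gen, inv_mul_cancel_left]⟩

end Generators

lemma _root_.List.IsChain.mem_of_crossing {α : Type*} {R : α → α → Prop} {P : α → Prop}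
    {c : α} (hR : ∀ x y, R x y → ¬ P x → P y → x = c) :
    ∀ {l : List α} {a b : α}, l.IsChain R → l.head? = some a → l.getLast? = some b →
      ¬ P a → P b → c ∈ l
  | [], _, _, _, ha, _, _, _ => by simp at ha
  | [x], a, b, _, ha, hb, hPa, hPb => by
    simp only [List.head?_cons, List.getLast?_singleton, Option.some.injEq] at ha hb
    subst ha hb
    exact absurd hPb hPa
  | x :: y :: l, a, b, hl, ha, hb, hPa, hPb => by
    obtain rfl : x = a := by simpa using ha
    rw [List.isChain_cons_cons] at hl
    by_cases hPy : P y
    · exact hR x y hl.1 hPa hPy ▸ List.mem_cons_self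
    · exact List.mem_cons_of_mem x
        (hl.2.mem_of_crossing hR rfl (by simpa [List.getLast?_cons_cons] using hb) hPy hPb)

section Edge

open FreeGroup

variable {r : ℕ} {s : Fin r × Bool} {g : FG r}

lemma norm_mul_inv_eq_or (x : FG r) :
    (x * g⁻¹).norm = (x * (gen s * g)⁻¹).norm + 1 ∨
      (x * g⁻¹).norm + 1 = (x * (gen s * g)⁻¹).norm := by
  rw [show x * g⁻¹ = x * (gen s * g)⁻¹ * gen s by group]
  exact norm_mul_gen_eq_or _ _

lemma eq_of_adjL_of_closer {x y : FG r} (hxy : adjL x y)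
    (hx : (x * g⁻¹).norm + 1 = (x * (gen s * g)⁻¹).norm)
    (hy : (y * g⁻¹).norm = (y * (gen s * g)⁻¹).norm + 1) : x = g := by
  obtain ⟨_, ⟨t, rfl⟩, rfl⟩ := hxy
  obtain ⟨v, rfl⟩ : ∃ v, x = v * g := ⟨x * g⁻¹, by group⟩
  rw [mul_inv_cancel_right, show v * g * (gen s * g)⁻¹ = v * (gen s)⁻¹ by group] at hx
  rw [show gen t * (v * g) * g⁻¹ = gen t * v by group,
    show gen t * (v * g) * (gen s * g)⁻¹ = gen t * v * (gen s)⁻¹ by group] at hy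
  have hlt : (gen t * v).norm ≤ 1 + v.norm := norm_gen t ▸ norm_mul_le _ _
  have hrt : (v * (gen s)⁻¹).norm ≤ 1 + (gen t * v * (gen s)⁻¹).norm := by
    rw [show v * (gen s)⁻¹ = (gen t)⁻¹ * (gen t * v * (gen s)⁻¹) by group, ← norm_gen t,
      ← norm_inv_eq (x := gen t)]
    exact norm_mul_le _ _
  -- `hlt`, `hrt` and the side conditions make `t v` and `v s⁻¹` geodesic, hence `t v s⁻¹` too
  -- unless `v = 1`; but `y` being closer to `h` says `|t v s⁻¹| = |t v| - 1`.
  by_contra hne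
  have hgeod := norm_mul_mul_of_norm_mul_eq (u := gen t) (a := v) (v := (gen s)⁻¹)
    (fun h => hne (by rw [h, one_mul])) (by rw [norm_gen]; omega)
    (by rw [norm_inv_eq, norm_gen]; omega)
  rw [norm_gen, norm_inv_eq, norm_gen] at hgeod
  omega

lemma mem_past_of_closer {f : FG r} (hf : (f * g⁻¹).norm + 1 = (f * (gen s * g)⁻¹).norm) :
    f ∈ Past (gen s * g) g := by
  intro l _ hhead hlast hl
  refine List.IsChain.mem_of_crossing (l := l)
    (P := fun x => (x * g⁻¹).norm = (x * (gen s * g)⁻¹).norm + 1)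
    (fun x y hxy hx hy => eq_of_adjL_of_closer hxy ((norm_mul_inv_eq_or x).resolve_left hx) hy)
    hl hhead hlast (by omega) ?_
  simp [norm_gen]

variable (hsg : (gen s * g).norm = g.norm + 1)
include hsg

lemma eq_of_norm_le_of_closer {f : FG r}
    (hf : (f * g⁻¹).norm = (f * (gen s * g)⁻¹).norm + 1) (hle : f.norm ≤ (gen s * g).norm) :
    f = gen s * g := by
  have hgeod := norm_mul_mul_of_norm_mul_eq (gen_ne_one s) (u := f * (gen s * g)⁻¹) (v := g)
    (by rw [show f * (gen s * g)⁻¹ * gen s = f * g⁻¹ by group, hf, norm_gen])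
    (by rw [hsg, norm_gen, add_comm])
  rw [show f * (gen s * g)⁻¹ * gen s * g = f by group, norm_gen] at hgeod
  have hone : f * (gen s * g)⁻¹ = 1 := norm_eq_zero.1 (by omega)
  exact mul_inv_eq_one.1 hone

lemma eq_of_adjL_of_norm_le {u : FG r} (hadj : adjL (gen s * g) u)
    (hle : u.norm ≤ (gen s * g).norm) : u = g := by
  obtain ⟨_, ⟨t, rfl⟩, rfl⟩ := hadj
  rcases norm_mul_inv_eq_or (s := s) (gen t * (gen s * g)) with hcl | hfar
  · have := eq_of_norm_le_of_closer hsg hcl hle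
    exact absurd (mul_eq_right.1 this) (gen_ne_one t)
  · rw [mul_inv_cancel_right, norm_gen] at hfar
    exact mul_inv_eq_one.1 (norm_eq_zero.1 (by omega))

end Edge

theorem _root_.Relation.ReflTransGen.avoid_leaf {α : Type*} {R : α → α → Prop} {h g : α}
    (hin : ∀ a, R a h → a = g) (hout : ∀ b, R h b → b = g) {a b : α}
    (hab : Relation.ReflTransGen R a b) (ha : a ≠ h) (hb : b ≠ h) :
    Relation.ReflTransGen (fun x y => R x y ∧ x ≠ h ∧ y ≠ h) a b := by
  suffices ∀ b, Relation.ReflTransGen R a b →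
      (b ≠ h → Relation.ReflTransGen (fun x y => R x y ∧ x ≠ h ∧ y ≠ h) a b) ∧
      (b = h → Relation.ReflTransGen (fun x y => R x y ∧ x ≠ h ∧ y ≠ h) a g) from
    (this b hab).1 hb
  intro b hab
  induction hab with
  | refl => exact ⟨fun _ => .refl, fun hah => absurd hah ha⟩
  | @tail c b _ hcb ih =>
    refine ⟨fun hbh => ?_, fun hbh => ?_⟩
    · by_cases hch : c = h
      · obtain rfl : b = g := hout b (hch ▸ hcb)
        exact ih.2 hch
      · exact (ih.1 hch).tail ⟨hcb, hch, hbh⟩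
    · obtain rfl : c = g := hin c (hbh ▸ hcb)
      by_cases hch : c = h
      exacts [ih.2 hch, ih.1 hch]

section Leaf

open FreeGroup

variable {r : ℕ} {F : Finset (FG r)} {s : Fin r × Bool} {g : FG r}
  (hsg : (gen s * g).norm = g.norm + 1) (hmax : ∀ f ∈ F, f.norm ≤ (gen s * g).norm)
include hsg hmax

lemma eq_of_mem_of_adjL {u : FG r} (hu : u ∈ F)
    (hadj : adjL u (gen s * g) ∨ adjL (gen s * g) u) : u = g :=
  eq_of_adjL_of_norm_le hsg (hadj.elim adjL.symm id) (hmax u hu)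

lemma LeftConnected.mem_of_gen_mul_mem (hF : LeftConnected (F : Set (FG r))) (h1 : 1 ∈ F)
    (hh : gen s * g ∈ F) : g ∈ F := by
  rcases (hF _ hh 1 h1).cases_head with h | ⟨c, ⟨-, hc, hadj⟩, -⟩
  · simp [h] at hsg
  · exact eq_of_mem_of_adjL hsg hmax hc (.inr hadj) ▸ hc

lemma LeftConnected.erase (hF : LeftConnected (F : Set (FG r))) :
    LeftConnected ((F.erase (gen s * g) : Finset (FG r)) : Set (FG r)) := by
  intro a ha b hb
  simp only [Finset.coe_erase, Set.mem_sdiff, Finset.mem_coe, Set.mem_singleton_iff] at ha hb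
  refine Relation.ReflTransGen.mono ?_ _ _ <|
    (hF a ha.1 b hb.1).avoid_leaf (g := g) (fun c hc => ?_) (fun c hc => ?_) ha.2 hb.2
  · rintro x y ⟨⟨hx, hy, hxy⟩, hxh, hyh⟩
    simp only [Finset.coe_erase, Set.mem_sdiff, Set.mem_singleton_iff]
    exact ⟨⟨hx, hxh⟩, ⟨hy, hyh⟩, hxy⟩
  · exact eq_of_mem_of_adjL hsg hmax hc.1 (.inl hc.2.2)
  · exact eq_of_mem_of_adjL hsg hmax hc.2.1 (.inr hc.2.2)

lemma mem_past_of_mem_erase {f : FG r} (hf : f ∈ F.erase (gen s * g)) :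
    f ∈ Past (gen s * g) g := by
  rw [Finset.mem_erase] at hf
  exact mem_past_of_closer ((norm_mul_inv_eq_or f).resolve_left
    fun hcl => hf.1 (eq_of_norm_le_of_closer hsg hcl (hmax f hf.2)))

end Leaf

section Cylinder

open FreeGroup

variable {r : ℕ}

def outwardEdges (F : Finset (FG r)) : Finset (FG r × (Fin r × Bool)) :=
  (F ×ˢ Finset.univ).filter fun e => gen e.2 * e.1 ∈ F ∧ (gen e.2 * e.1).norm = e.1.norm + 1

lemma outwardEdges_singleton_one : outwardEdges ({1} : Finset (FG r)) = ∅ := by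
  simp only [outwardEdges, Finset.filter_eq_empty_iff, Finset.mem_product, Finset.mem_singleton]
  rintro ⟨a, t⟩ ⟨rfl, -⟩ ⟨h, -⟩
  exact gen_ne_one t (by simpa using h)

lemma outwardEdges_eq_insert {F : Finset (FG r)} {s : Fin r × Bool} {g : FG r}
    (hsg : (gen s * g).norm = g.norm + 1) (hmax : ∀ f ∈ F, f.norm ≤ (gen s * g).norm)
    (hh : gen s * g ∈ F) (hg : g ∈ F) :
    outwardEdges F = insert (g, s) (outwardEdges (F.erase (gen s * g))) := by
  ext ⟨a, t⟩
  simp only [outwardEdges, Finset.mem_filter, Finset.mem_product, Finset.mem_univ, and_true,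
    Finset.mem_insert, Finset.mem_erase, Prod.mk.injEq]
  constructor
  · rintro ⟨ha, hta, hnorm⟩
    by_cases hah : a = gen s * g
    · rw [hah] at hta hnorm
      have := hmax _ hta
      omega
    by_cases htah : gen t * a = gen s * g
    · obtain rfl : a = g := eq_of_mem_of_adjL hsg hmax ha (.inl ⟨_, ⟨t, rfl⟩, htah.symm⟩)
      exact .inl ⟨rfl, gen_injective (mul_right_cancel htah)⟩
    · exact .inr ⟨⟨hah, ha⟩, ⟨htah, hta⟩, hnorm⟩
  · rintro (⟨rfl, rfl⟩ | ⟨⟨-, ha⟩, ⟨-, hta⟩, hnorm⟩)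
    exacts [⟨hg, hh, hsg⟩, ⟨ha, hta, hnorm⟩]

variable {K : Type*} [MeasurableSpace K] {ts : TransSys r K} {μ : Measure (FG r → K)}

lemma IsInducedBy.measure_pi_insert (hμ : IsInducedBy μ ts) {s : Fin r × Bool} {g : FG r}
    (hsg : (gen s * g).norm = g.norm + 1) {Q : Finset (FG r)} (hg : g ∈ Q)
    (hQ : ∀ f ∈ Q, f ≠ g → f ∈ Past (gen s * g) g) (z : FG r → K) :
    μ ((insert (gen s * g) (Q : Set (FG r))).pi fun f => {z f})
      = ENNReal.ofReal (ts.P s (z g) (z (gen s * g))) *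
        μ ((Q : Set (FG r)).pi fun f => {z f}) := by
  let fs : Fin (Q.erase g).card → FG r := fun i => (Q.erase g).equivFin.symm i
  have hfsQ : ∀ i, fs i ∈ Q.erase g := fun i => ((Q.erase g).equivFin.symm i).2
  have hfs : ∀ i, fs i ∈ Past (gen s * g) g ∧ fs i ≠ g := fun i =>
    have hi := Finset.mem_erase.1 (hfsQ i)
    ⟨hQ _ hi.2 hi.1, hi.1⟩
  have hcyl : (Q : Set (FG r)).pi (fun f => {z f})
      = {x | x g = z g} ∩ ⋂ i, {x | x (fs i) = z (fs i)} := by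
    ext x
    simp only [Set.mem_pi, Finset.mem_coe, Set.mem_singleton_iff, Set.mem_inter_iff,
      Set.mem_ofPred_eq, Set.mem_iInter]
    refine ⟨fun hx => ⟨hx g hg, fun i => hx _ (Finset.mem_of_mem_erase (hfsQ i))⟩,
      fun ⟨hxg, hxi⟩ f hf => ?_⟩
    rcases eq_or_ne f g with rfl | hfg
    · exact hxg
    · simpa [fs] using hxi ((Q.erase g).equivFin ⟨f, Finset.mem_erase.2 ⟨hfg, hf⟩⟩)
  rw [Set.insert_pi, hcyl]
  exact (hμ.2 s g hsg _ fs (fun i => z (fs i)) (z g) (z (gen s * g)) hfs).1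

theorem IsInducedBy.measure_pi_eq_prod (hμ : IsInducedBy μ ts) (z : FG r → K)
    (F : Finset (FG r)) (hF : LeftConnected (F : Set (FG r))) (h1 : 1 ∈ F) :
    μ ((F : Set (FG r)).pi fun f => {z f})
      = ENNReal.ofReal (ts.pi (z 1)) *
        ∏ e ∈ outwardEdges F, ENNReal.ofReal (ts.P e.2 (z e.1) (z (gen e.2 * e.1))) := by
  induction F using Finset.strongInduction with
  | H F ih =>
  obtain ⟨h, hhF, hmax⟩ := F.exists_max_image FreeGroup.norm ⟨1, h1⟩
  rcases eq_or_ne h 1 with rfl | hh1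
  · obtain rfl : F = {1} := Finset.eq_singleton_iff_unique_mem.2
      ⟨h1, fun f hf => norm_eq_zero.1 (Nat.le_zero.1 (norm_one (α := Fin r) ▸ hmax f hf))⟩
    rw [Finset.coe_singleton, Set.singleton_pi, outwardEdges_singleton_one, Finset.prod_empty,
      mul_one]
    exact hμ.1 (z 1)
  obtain ⟨s, g, rfl, hsg⟩ := exists_gen_mul_eq_of_ne_one hh1
  have hg : g ∈ F := hF.mem_of_gen_mul_mem hsg hmax h1 hhF
  have hgh : g ≠ gen s * g := ne_of_apply_ne FreeGroup.norm (by omega)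
  have hF' : (F : Set (FG r)) = insert (gen s * g) ↑(F.erase (gen s * g)) := by
    rw [← Finset.coe_insert, F.insert_erase hhF]
  rw [hF', hμ.measure_pi_insert hsg (Finset.mem_erase.2 ⟨hgh, hg⟩)
      (fun f hf _ => mem_past_of_mem_erase hsg hmax hf),
    ih _ (F.erase_ssubset hhF) (hF.erase hsg hmax)
      (Finset.mem_erase.2 ⟨hh1.symm, h1⟩),
    outwardEdges_eq_insert hsg hmax hhF hg, Finset.prod_insert (by simp [outwardEdges]),
    mul_left_comm]

end Cylinder

theorem stmt_11_general {r : ℕ} {K : Type*} [MeasurableSpace K]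
    (ts : TransSys r K)
    (μ : Measure (FG r → K)) (hμ : IsInducedBy μ ts)
    (F : Finset (FG r)) (hFconn : LeftConnected (F : Set (FG r)))
    (hFe : (1 : FG r) ∈ F) (z : FG r → K) :
    μ {x | ∀ g ∈ F, x g = z g}
      = ENNReal.ofReal (ts.pi (z 1)) *
        ∏ e ∈ (F ×ˢ (Finset.univ : Finset (Fin r × Bool))).filter
            (fun e => gen e.2 * e.1 ∈ F ∧
              FreeGroup.norm (gen e.2 * e.1) = FreeGroup.norm e.1 + 1),
          ENNReal.ofReal (ts.P e.2 (z e.1) (z (gen e.2 * e.1))) :=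
  hμ.measure_pi_eq_prod z F hFconn hFe

/-- the cylinder-set formula for a measure induced by an
invariant transition system: `μ(C) = π_{z(id)} ∏_{e∈E(F)} p_z(e)`. -/
theorem stmt_11 {r : ℕ} (hr : 1 ≤ r) {K : Type*} [MeasurableSpace K]
    [DiscreteMeasurableSpace K] [Countable K]
    (ts : TransSys r K) (hts : ts.IsInvariant)
    (μ : Measure (FG r → K)) [IsProbabilityMeasure μ] (hμ : IsInducedBy μ ts)
    (F : Finset (FG r)) (hFconn : LeftConnected (F : Set (FG r)))
    (hFe : (1 : FG r) ∈ F) (z : FG r → K) :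
    μ {x | ∀ g ∈ F, x g = z g}
      = ENNReal.ofReal (ts.pi (z 1)) *
        ∏ e ∈ (F ×ˢ (Finset.univ : Finset (Fin r × Bool))).filter
            (fun e => gen e.2 * e.1 ∈ F ∧
              FreeGroup.norm (gen e.2 * e.1) = FreeGroup.norm e.1 + 1),
          ENNReal.ofReal (ts.P e.2 (z e.1) (z (gen e.2 * e.1))) :=
  stmt_11_general ts μ hμ F hFconn hFe z

end

end Bowen
end

section
/- Let G = ⟨s₁,…,s_r⟩ be a free group of rank r ≥ 2. Then there exist a finite set K and a shift-invariant Borel probability measure μ on K^G such that (T,K^G,μ,α) — where T is the canonical action and α the canonical partition — is a Markov G-process with −∞ < f(T,μ,α) < 0. -/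
open MeasureTheory Filter
open scoped ENNReal symmDiff

namespace Bowen

noncomputable section

/-! ### Auxiliary construction for Statement 14 -/

section Construction

open scoped Classical

instance FG.countable (r : ℕ) : Countable (FG r) :=
  Function.Injective.countable FreeGroup.toWord_injective

variable {r : ℕ}

/-- The constant configuration. -/
def cfun (r : ℕ) (b : Bool) : FG r → Bool := fun _ => b

/-- The uniform measure on the two constant configurations. -/
def muX (r : ℕ) : Measure (FG r → Bool) :=
  (2 : ℝ≥0∞)⁻¹ • (Measure.dirac (cfun r false) + Measure.dirac (cfun r true))

lemma dirac_val {X : Type*} [MeasurableSpace X] [MeasurableSingletonClass X]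
    (a : X) (A : Set X) : Measure.dirac a A = if a ∈ A then 1 else 0 := by
  split_ifs with h
  · exact Measure.dirac_apply_of_mem h
  · refine measure_mono_null (fun x hx (hxa : x ∈ ({a} : Set X)) => h (hxa ▸ hx))
      (?_ : Measure.dirac a {a}ᶜ = 0)
    rw [Measure.dirac_apply' _ (measurableSet_singleton a).compl]
    simp

lemma muX_apply (A : Set (FG r → Bool)) :
    muX r A = 2⁻¹ * ((if cfun r false ∈ A then 1 else 0) +
      (if cfun r true ∈ A then 1 else 0)) := by
  rw [muX, Measure.smul_apply, Measure.add_apply, dirac_val, dirac_val, smul_eq_mul]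

lemma muX_compl_pair : muX r ({cfun r false, cfun r true} : Set (FG r → Bool))ᶜ = 0 := by
  rw [muX_apply]
  simp

instance muX_prob (r : ℕ) : IsProbabilityMeasure (muX r) := by
  constructor
  rw [muX_apply, if_pos (Set.mem_univ _), if_pos (Set.mem_univ _),
    one_add_one_eq_two, ENNReal.inv_mul_cancel (by norm_num) (by norm_num)]

lemma Hpart_muX {L : Type*} (q : (FG r → Bool) → L)
    (hq : q (cfun r false) ≠ q (cfun r true)) :
    Hpart (muX r) q = ENNReal.ofReal (Real.log 2) := by
  have hval : ∀ l : L, muX r (q ⁻¹' {l}) =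
      (if q (cfun r false) = l then 2⁻¹ else 0) +
        (if q (cfun r true) = l then 2⁻¹ else 0) := by
    intro l
    rw [muX_apply]
    simp only [Set.mem_preimage, Set.mem_singleton_iff]
    split_ifs <;> simp [mul_add]
  have hterm : ENNReal.ofReal (Real.negMulLog (((2:ℝ≥0∞)⁻¹).toReal)) =
      ENNReal.ofReal (2⁻¹ * Real.log 2) := by
    have hhalf : ((2:ℝ≥0∞)⁻¹).toReal = (2:ℝ)⁻¹ := by simp
    rw [hhalf, Real.negMulLog, Real.log_inv]
    congr 1
    ring
  have hsum : Hpart (muX r) q =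
      ∑ l ∈ ({q (cfun r false), q (cfun r true)} : Finset L),
        ENNReal.ofReal (Real.negMulLog ((muX r (q ⁻¹' {l})).toReal)) := by
    refine tsum_eq_sum ?_
    intro l hl
    simp only [Finset.mem_insert, Finset.mem_singleton, not_or] at hl
    rw [hval l, if_neg (fun h => hl.1 h.symm), if_neg (fun h => hl.2 h.symm)]
    simp [Real.negMulLog]
  have e0 : muX r (q ⁻¹' {q (cfun r false)}) = 2⁻¹ := by
    rw [hval, if_pos rfl, if_neg (Ne.symm hq), add_zero]
  have e1 : muX r (q ⁻¹' {q (cfun r true)}) = 2⁻¹ := by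
    rw [hval, if_neg hq, if_pos rfl, zero_add]
  have hnn : (0:ℝ) ≤ 2⁻¹ * Real.log 2 :=
    mul_nonneg (by norm_num) (Real.log_nonneg one_le_two)
  rw [hsum, Finset.sum_pair hq, e0, e1, hterm, ← ENNReal.ofReal_add hnn hnn]
  congr 1
  ring

lemma shiftT_cfun (g : FG r) (b : Bool) : shiftT g (cfun r b) = cfun r b := rfl

lemma Hpart_pow (n : ℕ) :
    Hpart (muX r) (pow shiftT (fun x : FG r → Bool => x 1) (n + 1)) =
      ENNReal.ofReal (Real.log 2) := by
  refine Hpart_muX _ (fun h => ?_)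
  have h1 : (1 : FG r) ∈ ball r (n + 1) := by
    simp [ball, FreeGroup.norm_one]
  have := congrFun h ⟨1, h1⟩
  simp [pow, powS, shiftT, cfun] at this

lemma Hpart_pjoin_pow (n : ℕ) (i : Fin r) :
    Hpart (muX r) (pjoin (pow shiftT (fun x : FG r → Bool => x 1) (n + 1))
      (pull shiftT (FreeGroup.of i) (pow shiftT (fun x : FG r → Bool => x 1) (n + 1)))) =
      ENNReal.ofReal (Real.log 2) := by
  refine Hpart_muX _ (fun h => ?_)
  have h1 : (1 : FG r) ∈ ball r (n + 1) := by
    simp [ball, FreeGroup.norm_one]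
  have := congrFun (congrArg Prod.fst h) ⟨1, h1⟩
  simp [pjoin, pow, powS, shiftT, cfun] at this

lemma FF_muX (n : ℕ) :
    FF shiftT (muX r) (pow shiftT (fun x : FG r → Bool => x 1) (n + 1)) =
      (1 - (r : ℝ)) * Real.log 2 := by
  rw [FF]
  have hlog : (0:ℝ) ≤ Real.log 2 := Real.log_nonneg one_le_two
  rw [Hpart_pow, ENNReal.toReal_ofReal hlog]
  have hs : ∀ i : Fin r,
      (Hpart (muX r) (pjoin (pow shiftT (fun x : FG r → Bool => x 1) (n + 1))
        (pull shiftT (FreeGroup.of i)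
          (pow shiftT (fun x : FG r → Bool => x 1) (n + 1))))).toReal = Real.log 2 := by
    intro i
    rw [Hpart_pjoin_pow, ENNReal.toReal_ofReal hlog]
  rw [Finset.sum_congr rfl (fun i _ => hs i), Finset.sum_const, Finset.card_univ,
    Fintype.card_fin, nsmul_eq_mul]
  ring

lemma littleF_muX :
    littleF shiftT (muX r) (fun x : FG r → Bool => x 1) =
      (((1 - (r : ℝ)) * Real.log 2 : ℝ) : EReal) := by
  rw [littleF]
  simp only [FF_muX]
  exact iInf_const

lemma mem_pull_cfun (h : FG r) (k b : Bool) :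
    cfun r b ∈ (pull shiftT h (fun x : FG r → Bool => x 1)) ⁻¹' {k} ↔ b = k := by
  simp [pull, shiftT, cfun]

lemma markov_muX : IsMarkov (muX r) shiftT (fun x : FG r → Bool => x 1) := by
  intro s hs g k
  have hAB : ((pull shiftT (s * g) (fun x : FG r → Bool => x 1)) ⁻¹' {k}).indicator
        (fun _ => (1:ℝ)) =ᵐ[muX r]
      ((pull shiftT g (fun x : FG r → Bool => x 1)) ⁻¹' {k}).indicator (fun _ => (1:ℝ)) := by
    refine Filter.eventuallyEq_of_mem (MeasureTheory.mem_ae_iff.2 muX_compl_pair) ?_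
    rintro x (rfl | rfl)
    · simp only [Set.indicator_apply]
      exact if_congr ((mem_pull_cfun (s * g) k false).trans
        (mem_pull_cfun g k false).symm) rfl rfl
    · simp only [Set.indicator_apply]
      exact if_congr ((mem_pull_cfun (s * g) k true).trans
        (mem_pull_cfun g k true).symm) rfl rfl
  have hB2 : MeasurableSet[sAlg (pull shiftT g (fun x : FG r → Bool => x 1))]
      ((pull shiftT g (fun x : FG r → Bool => x 1)) ⁻¹' {k}) := ⟨{k}, trivial, rfl⟩
  have hg : g ∈ Past (s * g) g := by
    intro l hne hhead hlast hchain
    exact List.mem_of_mem_head? (by simp [hhead])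
  have hm21 : sAlg (pull shiftT g (fun x : FG r → Bool => x 1)) ≤
      sAlgSet shiftT (fun x : FG r → Bool => x 1) (Past (s * g) g) :=
    le_iSup₂ (f := fun f (_ : f ∈ Past (s * g) g) =>
      sAlg (pull shiftT f (fun x : FG r → Bool => x 1))) g hg
  have hle : ∀ f : FG r, sAlg (pull shiftT f (fun x : FG r → Bool => x 1)) ≤
      (inferInstance : MeasurableSpace (FG r → Bool)) := by
    intro f S hS
    obtain ⟨S', -, rfl⟩ := hS
    exact measurable_pi_apply (1 * f) (MeasurableSet.of_discrete (s := S'))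
  have hm1 : sAlgSet shiftT (fun x : FG r → Bool => x 1) (Past (s * g) g) ≤
      (inferInstance : MeasurableSpace (FG r → Bool)) :=
    iSup₂_le fun f _ => hle f
  have hBmeas : MeasurableSet ((pull shiftT g (fun x : FG r → Bool => x 1)) ⁻¹' {k}) :=
    measurable_pi_apply (1 * g) (MeasurableSet.of_discrete (s := ({k} : Set Bool)))
  have intB : Integrable (((pull shiftT g (fun x : FG r → Bool => x 1)) ⁻¹' {k}).indicator
      fun _ => (1:ℝ)) (muX r) := (integrable_const 1).indicator hBmeas
  have smB : StronglyMeasurable[sAlg (pull shiftT g (fun x : FG r → Bool => x 1))]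
      (((pull shiftT g (fun x : FG r → Bool => x 1)) ⁻¹' {k}).indicator fun _ => (1:ℝ)) :=
    stronglyMeasurable_const.indicator hB2
  have h1 := (condExp_congr_ae (m := sAlgSet shiftT (fun x : FG r → Bool => x 1)
    (Past (s * g) g)) (μ := muX r) hAB).trans
    (by rw [condExp_of_stronglyMeasurable hm1 (smB.mono hm21) intB] :
      (muX r)[((pull shiftT g (fun x : FG r → Bool => x 1)) ⁻¹' {k}).indicator
        (fun _ => (1:ℝ)) | sAlgSet shiftT (fun x : FG r → Bool => x 1) (Past (s * g) g)]
        =ᵐ[muX r] ((pull shiftT g (fun x : FG r → Bool => x 1)) ⁻¹' {k}).indicator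
          (fun _ => (1:ℝ)))
  have h2 := (condExp_congr_ae (m := sAlg (pull shiftT g (fun x : FG r → Bool => x 1)))
    (μ := muX r) hAB).trans
    (by rw [condExp_of_stronglyMeasurable (hle g) smB intB] :
      (muX r)[((pull shiftT g (fun x : FG r → Bool => x 1)) ⁻¹' {k}).indicator
        (fun _ => (1:ℝ)) | sAlg (pull shiftT g (fun x : FG r → Bool => x 1))]
        =ᵐ[muX r] ((pull shiftT g (fun x : FG r → Bool => x 1)) ⁻¹' {k}).indicator
          (fun _ => (1:ℝ)))
  exact h1.trans h2.symm

end Construction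

/-- over a free group of rank `r ≥ 2` there is a Markov process
(on a finite state space, with shift-invariant measure) whose `f`-invariant is
finite and negative. -/
theorem stmt_14 {r : ℕ} (hr : 2 ≤ r) :
    ∃ (K : Type) (mK : MeasurableSpace K), Finite K ∧ DiscreteMeasurableSpace K ∧
      ∃ (μ : Measure (FG r → K)), IsProbabilityMeasure μ ∧
        (∀ (g : FG r) (E : Set (FG r → K)), MeasurableSet E → μ (shiftT g ⁻¹' E) = μ E) ∧
        IsMarkov μ shiftT (fun x : FG r → K => x 1) ∧
        (⊥ : EReal) < littleF shiftT μ (fun x : FG r → K => x 1) ∧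
        littleF shiftT μ (fun x : FG r → K => x 1) < 0 := by
  refine ⟨Bool, inferInstance, inferInstance, inferInstance, muX r, inferInstance,
    ?_, markov_muX, ?_, ?_⟩
  · intro g E _
    rw [muX_apply, muX_apply]
    have h0 : (cfun r false ∈ shiftT g ⁻¹' E) = (cfun r false ∈ E) := by
      rw [Set.mem_preimage, shiftT_cfun]
    have h1 : (cfun r true ∈ shiftT g ⁻¹' E) = (cfun r true ∈ E) := by
      rw [Set.mem_preimage, shiftT_cfun]
    rw [h0, h1]
  · rw [littleF_muX]
    exact EReal.bot_lt_coe _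
  · rw [littleF_muX]
    have hneg : (1 - (r : ℝ)) * Real.log 2 < 0 :=
      mul_neg_of_neg_of_pos (by
        have h2 : (2:ℝ) ≤ (r:ℝ) := by exact_mod_cast hr
        linarith) (Real.log_pos one_lt_two)
    exact_mod_cast hneg

end

end Bowen
end

section
/- Let G = ⟨s₁,…,s_r⟩ be the free group of rank r and G ↷ᵀ (X,B,μ) a G-system. If α and β are partitions of X with H(α) + H(β) < ∞, then |F(T,α) − F(T,β)| ≤ (4r−1)·d(α,β), where d is the Rohlin distance. -/
open MeasureTheory Filter
open scoped ENNReal symmDiff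

namespace Bowen

noncomputable section

/-!
Write `a = H(α|β)` and `b = H(β|α)`, so that `d(α,β) = a + b`. The chain rule
`H(α ∨ β) = H(β) + H(α|β)`, applied in both orders, gives `H(β) ≤ H(α) + b`, which controls the
term `(1 - 2r) H(α)`. For a generator `s`,
`H(α ∨ T_s⁻¹α) ≤ H(β ∨ T_s⁻¹β) + H(α ∨ T_s⁻¹α | β ∨ T_s⁻¹β)`, and the conditional chain rule,
monotonicity under coarsening of the condition and invariance of `μ` bound the last term by
`H(T_s⁻¹α | T_s⁻¹β) + H(α|β) = 2a`. Hence `F(T,α) - F(T,β) ≤ 2r a + (2r - 1) b ≤ (4r - 1) d(α,β)`,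
and symmetrically.

For countable partitions the conditional expectation defining `HpartC` is constant on the atoms
of the condition, so `H(α|β) = ∑ μ(A ∩ B) log (μ B / μ (A ∩ B))` over atoms `A` of `α` and `B`
of `β`; monotonicity in the condition is then the log-sum inequality.
-/

lemma pjoin_preimage_singleton {X K L : Type*} (p : X → K) (q : X → L) (kl : K × L) :
    pjoin p q ⁻¹' {kl} = p ⁻¹' {kl.1} ∩ q ⁻¹' {kl.2} := by
  ext x; simp [pjoin, Prod.ext_iff]

lemma _root_.Measurable.pjoin {X K L : Type*} [MeasurableSpace X] [MeasurableSpace K]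
    [MeasurableSpace L] {p : X → K} {q : X → L} (hp : Measurable p) (hq : Measurable q) :
    Measurable (pjoin p q) :=
  hp.prodMk hq

section Entropy

variable {X : Type*} [MeasurableSpace X] {K L M : Type*}

/-- `c · log (b / c)` in `ℝ≥0∞`; it is only evaluated at `c ≤ b`, where the real logarithm
difference is nonnegative. -/
def mulLogDiv (c b : ℝ≥0∞) : ℝ≥0∞ := c * ENNReal.ofReal (Real.log b.toReal - Real.log c.toReal)

@[simp]
lemma mulLogDiv_zero_left (b : ℝ≥0∞) : mulLogDiv 0 b = 0 := zero_mul _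

lemma mulLogDiv_eq_add {d e f : ℝ≥0∞} (hde : d ≤ e) (hef : e ≤ f) (hf : f ≠ ⊤) :
    mulLogDiv d f
      = d * ENNReal.ofReal (Real.log f.toReal - Real.log e.toReal) + mulLogDiv d e := by
  rcases eq_or_ne d 0 with rfl | hd0
  · simp
  have he : e ≠ ⊤ := ne_top_of_le_ne_top hf hef
  have hdR : 0 < d.toReal := ENNReal.toReal_pos hd0 (ne_top_of_le_ne_top he hde)
  have hdeR : d.toReal ≤ e.toReal := ENNReal.toReal_mono he hde
  have hefR : e.toReal ≤ f.toReal := ENNReal.toReal_mono hf hef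
  rw [mulLogDiv, mulLogDiv, ← mul_add, ← ENNReal.ofReal_add
    (sub_nonneg.mpr (Real.log_le_log (hdR.trans_le hdeR) hefR))
    (sub_nonneg.mpr (Real.log_le_log hdR hdeR)), sub_add_sub_cancel]

/-- The termwise inequality behind the log-sum inequality: `log x ≤ x - 1` at
`x = b C / (c B)`, multiplied by `c`. -/
lemma mul_log_sub_add_le {b c B C : ℝ} (hb : 0 < b) (hc : 0 < c) (hB : 0 < B) (hC : 0 < C) :
    c * (Real.log b - Real.log c) + c ≤ C / B * b + c * (Real.log B - Real.log C) := by
  have hlog := Real.log_le_sub_one_of_pos (x := b * C / (c * B)) (by positivity)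
  rw [Real.log_div (by positivity) (by positivity), Real.log_mul hb.ne' hC.ne',
    Real.log_mul hc.ne' hB.ne'] at hlog
  have hmul := mul_le_mul_of_nonneg_left hlog hc.le
  have hx : c * (b * C / (c * B) - 1) = C / B * b - c := by field_simp
  linarith

lemma mulLogDiv_add_le {b c B C : ℝ≥0∞} (hcb : c ≤ b) (hb : b ≠ ⊤) (hCB : C ≤ B) (hB : B ≠ ⊤)
    (hC : C ≠ 0) :
    mulLogDiv c b + c
      ≤ C / B * b + c * ENNReal.ofReal (Real.log B.toReal - Real.log C.toReal) := by
  rcases eq_or_ne c 0 with rfl | hc0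
  · simp
  have hc : c ≠ ⊤ := ne_top_of_le_ne_top hb hcb
  have hcR : 0 < c.toReal := ENNReal.toReal_pos hc0 hc
  have hCR : 0 < C.toReal := ENNReal.toReal_pos hC (ne_top_of_le_ne_top hB hCB)
  have hbR : c.toReal ≤ b.toReal := ENNReal.toReal_mono hb hcb
  have hBR : C.toReal ≤ B.toReal := ENNReal.toReal_mono hB hCB
  have hlhs : mulLogDiv c b + c = ENNReal.ofReal
      (c.toReal * (Real.log b.toReal - Real.log c.toReal) + c.toReal) := by
    rw [ENNReal.ofReal_add (mul_nonneg hcR.le (sub_nonneg.mpr (Real.log_le_log hcR hbR)))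
      hcR.le, ENNReal.ofReal_mul hcR.le, ENNReal.ofReal_toReal hc, mulLogDiv]
  have hrhs : C / B * b + c * ENNReal.ofReal (Real.log B.toReal - Real.log C.toReal)
      = ENNReal.ofReal (C.toReal / B.toReal * b.toReal
          + c.toReal * (Real.log B.toReal - Real.log C.toReal)) := by
    rw [ENNReal.ofReal_add (by positivity)
        (mul_nonneg hcR.le (sub_nonneg.mpr (Real.log_le_log hCR hBR))),
      ENNReal.ofReal_mul (by positivity), ENNReal.ofReal_mul hcR.le,
      ENNReal.ofReal_div_of_pos (hCR.trans_le hBR), ENNReal.ofReal_toReal hc,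
      ENNReal.ofReal_toReal hb, ENNReal.ofReal_toReal hB,
      ENNReal.ofReal_toReal (ne_top_of_le_ne_top hB hCB)]
  rw [hlhs, hrhs]
  exact ENNReal.ofReal_le_ofReal
    (mul_log_sub_add_le (hcR.trans_le hbR) hcR (hCR.trans_le hBR) hCR)

/-- The log-sum inequality. -/
lemma tsum_mulLogDiv_le {ι : Type*} (c b : ι → ℝ≥0∞) (hcb : ∀ i, c i ≤ b i)
    (hB : ∑' i, b i ≠ ⊤) :
    ∑' i, mulLogDiv (c i) (b i) ≤ mulLogDiv (∑' i, c i) (∑' i, b i) := by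
  set B := ∑' i, b i
  set C := ∑' i, c i
  have hCB : C ≤ B := ENNReal.tsum_le_tsum hcb
  have hC : C ≠ ⊤ := ne_top_of_le_ne_top hB hCB
  rcases eq_or_ne C 0 with hC0 | hC0
  · simp [ENNReal.tsum_eq_zero.mp hC0, hC0]
  have hB0 : B ≠ 0 := fun h => hC0 (le_antisymm (h ▸ hCB) zero_le)
  have hsum := ENNReal.tsum_le_tsum fun i => mulLogDiv_add_le (hcb i)
    (ne_top_of_le_ne_top hB (ENNReal.le_tsum i)) hCB hB hC0
  rw [ENNReal.tsum_add, ENNReal.tsum_add, ENNReal.tsum_mul_left, ENNReal.tsum_mul_right,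
    ENNReal.div_mul_cancel hB0 hB, add_comm C] at hsum
  exact (ENNReal.add_le_add_iff_right hC).mp hsum

lemma Hpart_eq_tsum_mulLogDiv (μ : Measure X) (p : X → K) :
    Hpart μ p = ∑' k, mulLogDiv (μ (p ⁻¹' {k})) 1 := by
  refine tsum_congr fun k => ?_
  rcases eq_or_ne (μ (p ⁻¹' {k})) ⊤ with h | h
  · simp [h, mulLogDiv]
  · rw [mulLogDiv, Real.negMulLog, neg_mul_comm, ENNReal.ofReal_mul ENNReal.toReal_nonneg,
      ENNReal.ofReal_toReal h, ENNReal.toReal_one, Real.log_one, zero_sub]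

/-- The conditional entropy `H(p|q)` as an explicit sum over pairs of atoms; it agrees with
`HpartC μ p (sAlg q)` by `HpartC_sAlg_eq_Hcond`. -/
def Hcond (μ : Measure X) (p : X → K) (q : X → L) : ℝ≥0∞ :=
  ∑' kl : K × L, mulLogDiv (μ (p ⁻¹' {kl.1} ∩ q ⁻¹' {kl.2})) (μ (q ⁻¹' {kl.2}))

lemma Hpart_comp_equiv {K' : Type*} (μ : Measure X) (p : X → K) (e : K ≃ K') :
    Hpart μ (e ∘ p) = Hpart μ p := by
  rw [Hpart, ← e.tsum_eq]
  refine tsum_congr fun k => ?_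
  congr 4
  ext x; simp

lemma Hpart_pjoin_comm (μ : Measure X) (p : X → K) (q : X → L) :
    Hpart μ (pjoin p q) = Hpart μ (pjoin q p) :=
  (Hpart_comp_equiv μ (pjoin p q) (Equiv.prodComm K L)).symm

lemma Hpart_comp_measurePreserving (μ : Measure X) {τ : X → X}
    (hτ : MeasurePreserving τ μ μ) {p : X → K} (hp : ∀ k, MeasurableSet (p ⁻¹' {k})) :
    Hpart μ (p ∘ τ) = Hpart μ p :=
  tsum_congr fun k => by
    rw [Set.preimage_comp, hτ.measure_preimage (hp k).nullMeasurableSet]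

lemma Hcond_comp_measurePreserving (μ : Measure X) {τ : X → X}
    (hτ : MeasurePreserving τ μ μ) {p : X → K} {q : X → L}
    (hp : ∀ k, MeasurableSet (p ⁻¹' {k})) (hq : ∀ l, MeasurableSet (q ⁻¹' {l})) :
    Hcond μ (p ∘ τ) (q ∘ τ) = Hcond μ p q :=
  tsum_congr fun kl => by
    rw [Set.preimage_comp, Set.preimage_comp, ← Set.preimage_inter,
      hτ.measure_preimage ((hp kl.1).inter (hq kl.2)).nullMeasurableSet,
      hτ.measure_preimage (hq kl.2).nullMeasurableSet]

lemma tsum_measure_inter_preimage_singleton [MeasurableSpace L] [MeasurableSingletonClass L]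
    [Countable L] (μ : Measure X) {q : X → L} (hq : Measurable q)
    (D : Set X) (S : Set L) :
    ∑' l : S, μ (D ∩ q ⁻¹' {(l : L)}) = μ (D ∩ q ⁻¹' S) := by
  have := tsum_measure_preimage_singleton (μ := μ.restrict D) S.to_countable
    (fun l _ => hq (measurableSet_singleton l))
  simpa only [Measure.restrict_apply (hq (measurableSet_singleton _)),
    Measure.restrict_apply (hq S.to_countable.measurableSet), Set.inter_comm D] using this

lemma tsum_measure_preimage_singleton_inter [MeasurableSpace L] [MeasurableSingletonClass L]
    [Countable L] (μ : Measure X) {q : X → L} (hq : Measurable q)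
    (D : Set X) : ∑' l, μ (q ⁻¹' {l} ∩ D) = μ D := by
  rw [← tsum_univ]
  simpa [Set.inter_comm D] using tsum_measure_inter_preimage_singleton μ hq D Set.univ

lemma Hcond_const (μ : Measure X) [IsProbabilityMeasure μ] (p : X → K) :
    Hcond μ p (fun _ => ()) = Hpart μ p := by
  rw [Hcond, ENNReal.tsum_prod', Hpart_eq_tsum_mulLogDiv]
  simp

lemma Hpart_pjoin [MeasurableSpace K] [MeasurableSingletonClass K] [Countable K]
    (μ : Measure X) [IsProbabilityMeasure μ] {p : X → K} (hp : Measurable p) (q : X → L) :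
    Hpart μ (pjoin p q) = Hpart μ q + Hcond μ p q := by
  have hsplit : ∀ kl : K × L, mulLogDiv (μ (pjoin p q ⁻¹' {kl})) 1
      = μ (p ⁻¹' {kl.1} ∩ q ⁻¹' {kl.2})
          * ENNReal.ofReal (Real.log 1 - Real.log (μ (q ⁻¹' {kl.2})).toReal)
        + mulLogDiv (μ (p ⁻¹' {kl.1} ∩ q ⁻¹' {kl.2})) (μ (q ⁻¹' {kl.2})) := fun kl => by
    rw [pjoin_preimage_singleton, mulLogDiv_eq_add (measure_mono Set.inter_subset_right)
      prob_le_one ENNReal.one_ne_top, ENNReal.toReal_one]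
  rw [Hpart_eq_tsum_mulLogDiv, Hpart_eq_tsum_mulLogDiv, tsum_congr hsplit, ENNReal.tsum_add,
    Hcond, ENNReal.tsum_prod', ENNReal.tsum_comm]
  congr 1
  refine tsum_congr fun l => ?_
  dsimp only
  rw [ENNReal.tsum_mul_right, tsum_measure_preimage_singleton_inter μ hp, mulLogDiv,
    ENNReal.toReal_one]

lemma Hpart_le_add_Hcond [MeasurableSpace K] [MeasurableSingletonClass K] [Countable K]
    [MeasurableSpace L] [MeasurableSingletonClass L] [Countable L]
    (μ : Measure X) [IsProbabilityMeasure μ] {p : X → K} {q : X → L} (hp : Measurable p)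
    (hq : Measurable q) :
    Hpart μ p ≤ Hpart μ q + Hcond μ p q := by
  calc Hpart μ p ≤ Hpart μ p + Hcond μ q p := le_self_add
    _ = Hpart μ q + Hcond μ p q := by
      rw [← Hpart_pjoin μ hq p, Hpart_pjoin_comm, Hpart_pjoin μ hp q]

lemma Hcond_le_Hcond_comp [MeasurableSpace L] [MeasurableSingletonClass L] [Countable L]
    (μ : Measure X) [IsFiniteMeasure μ] (p : X → K) {q : X → L} (hq : Measurable q)
    (f : L → M) :
    Hcond μ p q ≤ Hcond μ p (f ∘ q) := by
  rw [Hcond, Hcond, ENNReal.tsum_prod', ENNReal.tsum_prod']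
  refine ENNReal.tsum_le_tsum fun k => ?_
  rw [← (Equiv.sigmaFiberEquiv f).tsum_eq, ENNReal.tsum_sigma']
  refine ENNReal.tsum_le_tsum fun m => ?_
  simp only [Equiv.sigmaFiberEquiv_apply]
  have hb : ∑' l : {l // f l = m}, μ (q ⁻¹' {(l : L)}) = μ (q ⁻¹' (f ⁻¹' {m})) := by
    have := tsum_measure_inter_preimage_singleton μ hq Set.univ (f ⁻¹' {m})
    simp only [Set.univ_inter] at this
    exact this
  have hc : ∑' l : {l // f l = m}, μ (p ⁻¹' {k} ∩ q ⁻¹' {(l : L)})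
      = μ (p ⁻¹' {k} ∩ q ⁻¹' (f ⁻¹' {m})) :=
    tsum_measure_inter_preimage_singleton μ hq _ (f ⁻¹' {m})
  refine (tsum_mulLogDiv_le _ _ (fun l => measure_mono Set.inter_subset_right)
    (hb ▸ measure_ne_top μ _)).trans_eq ?_
  rw [hb, hc]
  rfl

lemma Hcond_le_Hpart [MeasurableSpace L] [MeasurableSingletonClass L] [Countable L]
    (μ : Measure X) [IsProbabilityMeasure μ] (p : X → K) {q : X → L} (hq : Measurable q) :
    Hcond μ p q ≤ Hpart μ p :=
  (Hcond_le_Hcond_comp μ p hq fun _ => ()).trans_eq (Hcond_const μ p)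

/-- Obtained by cancelling `H(t)` between the two expansions of `H(p ∨ q ∨ t)` given by the
chain rule. -/
lemma Hcond_pjoin [MeasurableSpace K] [MeasurableSingletonClass K] [Countable K]
    [MeasurableSpace L] [MeasurableSingletonClass L] [Countable L]
    (μ : Measure X) [IsProbabilityMeasure μ] {p : X → K} {q : X → L} (hp : Measurable p)
    (hq : Measurable q) {t : X → M} (ht : Hpart μ t ≠ ⊤) :
    Hcond μ (pjoin p q) t = Hcond μ q t + Hcond μ p (pjoin q t) := by
  have h := Hpart_comp_equiv μ (pjoin (pjoin p q) t) (Equiv.prodAssoc K L M)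
  change Hpart μ (pjoin p (pjoin q t)) = _ at h
  rw [Hpart_pjoin μ (hp.pjoin hq), Hpart_pjoin μ hp, Hpart_pjoin μ hq, add_assoc] at h
  exact ((ENNReal.add_right_inj ht).mp h).symm

lemma Hpart_pjoin_le [MeasurableSpace K] [MeasurableSingletonClass K] [Countable K]
    [MeasurableSpace L] [MeasurableSingletonClass L] [Countable L]
    (μ : Measure X) [IsProbabilityMeasure μ] {p : X → K} {q : X → L} (hp : Measurable p)
    (hq : Measurable q) :
    Hpart μ (pjoin p q) ≤ Hpart μ p + Hpart μ q := by
  rw [Hpart_pjoin μ hp, add_comm (Hpart μ p)]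
  exact add_le_add_right (Hcond_le_Hpart μ p hq) _

lemma Hpart_pjoin_comp_ne_top [MeasurableSpace L] [MeasurableSingletonClass L] [Countable L]
    (μ : Measure X) [IsProbabilityMeasure μ] {τ : X → X} (hτ : MeasurePreserving τ μ μ)
    {β : X → L} (hβ : Measurable β) (hHβ : Hpart μ β ≠ ⊤) :
    Hpart μ (pjoin β (β ∘ τ)) ≠ ⊤ := by
  refine ne_top_of_le_ne_top ?_ (Hpart_pjoin_le μ hβ (hβ.comp hτ.measurable))
  rw [Hpart_comp_measurePreserving μ hτ fun l => hβ (measurableSet_singleton l)]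
  exact ENNReal.add_ne_top.mpr ⟨hHβ, hHβ⟩

lemma Hpart_pjoin_comp_le [MeasurableSpace K] [MeasurableSingletonClass K] [Countable K]
    [MeasurableSpace L] [MeasurableSingletonClass L] [Countable L]
    (μ : Measure X) [IsProbabilityMeasure μ] {τ : X → X} (hτ : MeasurePreserving τ μ μ)
    {α : X → K} {β : X → L} (hα : Measurable α) (hβ : Measurable β) (hHβ : Hpart μ β ≠ ⊤) :
    Hpart μ (pjoin α (α ∘ τ)) ≤ Hpart μ (pjoin β (β ∘ τ)) + 2 * Hcond μ α β := by
  set Q := pjoin β (β ∘ τ)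
  have hατ : Measurable (α ∘ τ) := hα.comp hτ.measurable
  have hβτ : Measurable (β ∘ τ) := hβ.comp hτ.measurable
  have hQ : Measurable Q := hβ.pjoin hβτ
  have hHQ : Hpart μ Q ≠ ⊤ := Hpart_pjoin_comp_ne_top μ hτ hβ hHβ
  have hshift : Hcond μ (α ∘ τ) Q ≤ Hcond μ α β :=
    (Hcond_le_Hcond_comp μ (α ∘ τ) hQ Prod.snd).trans_eq
      (Hcond_comp_measurePreserving μ hτ (fun k => hα (measurableSet_singleton k))
        fun l => hβ (measurableSet_singleton l))
  have hdrop : Hcond μ α (pjoin (α ∘ τ) Q) ≤ Hcond μ α β :=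
    Hcond_le_Hcond_comp μ α (hατ.pjoin hQ) fun y => y.2.1
  calc Hpart μ (pjoin α (α ∘ τ)) ≤ Hpart μ Q + Hcond μ (pjoin α (α ∘ τ)) Q :=
        Hpart_le_add_Hcond μ (hα.pjoin hατ) hQ
    _ = Hpart μ Q + (Hcond μ (α ∘ τ) Q + Hcond μ α (pjoin (α ∘ τ) Q)) := by
        rw [Hcond_pjoin μ hα hατ hHQ]
    _ ≤ Hpart μ Q + 2 * Hcond μ α β := by
        rw [two_mul]
        gcongr

lemma mul_ofReal_neg_log_div {c b : ℝ≥0∞} (hcb : c ≤ b) (hb : b ≠ ⊤) :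
    c * ENNReal.ofReal (-Real.log (c.toReal / b.toReal)) = mulLogDiv c b := by
  rcases eq_or_ne c 0 with rfl | hc0
  · simp
  have hcR : c.toReal ≠ 0 := ENNReal.toReal_ne_zero.mpr ⟨hc0, ne_top_of_le_ne_top hb hcb⟩
  have hbR : b.toReal ≠ 0 :=
    ENNReal.toReal_ne_zero.mpr ⟨(pos_of_ne_zero hc0).trans_le hcb |>.ne', hb⟩
  rw [Real.log_div hcR hbR, neg_sub, mulLogDiv]

lemma lintegral_comp_eq_tsum {J : Type*} [MeasurableSpace J] [MeasurableSingletonClass J]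
    [Countable J] (μ : Measure X) {g : X → J} (hg : Measurable g) (F : J → ℝ≥0∞) :
    ∫⁻ x, F (g x) ∂μ = ∑' j, μ (g ⁻¹' {j}) * F j := by
  rw [← lintegral_map (measurable_of_countable F) hg, lintegral_countable']
  exact tsum_congr fun j => by rw [Measure.map_apply hg (measurableSet_singleton j), mul_comm]

lemma sAlg_le [MeasurableSpace L] [MeasurableSingletonClass L] [Countable L] {q : X → L}
    (hq : Measurable q) : sAlg q ≤ ‹MeasurableSpace X› := by
  rintro s ⟨S, -, rfl⟩
  exact hq S.to_countable.measurableSet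

lemma setIntegral_comp_preimage_singleton [MeasurableSpace L] [MeasurableSingletonClass L]
    (μ : Measure X) {q : X → L} (hq : Measurable q) (G : L → ℝ) (l : L) :
    ∫ x in q ⁻¹' {l}, G (q x) ∂μ = μ.real (q ⁻¹' {l}) * G l := by
  rw [setIntegral_congr_fun (hq (measurableSet_singleton l)) fun x (hx : q x = l) => by rw [hx],
    setIntegral_const, smul_eq_mul]

lemma condExp_indicator_sAlg [MeasurableSpace L] [MeasurableSingletonClass L] [Countable L]
    (μ : Measure X) [IsFiniteMeasure μ] {q : X → L} (hq : Measurable q) {A : Set X}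
    (hA : MeasurableSet A) :
    μ[A.indicator (fun _ => (1 : ℝ)) | sAlg q]
      =ᵐ[μ] fun x => μ.real (A ∩ q ⁻¹' {q x}) / μ.real (q ⁻¹' {q x}) := by
  set G : L → ℝ := fun l => μ.real (A ∩ q ⁻¹' {l}) / μ.real (q ⁻¹' {l})
  have hGq : Measurable[sAlg q] (fun x => G (q x)) :=
    (measurable_from_top (f := G)).comp (Measurable.of_comap_le le_rfl)
  have hG : ∀ l, ‖G l‖ ≤ 1 := fun l => by
    rw [Real.norm_of_nonneg (by positivity)]
    exact div_le_one_of_le₀ (measureReal_mono Set.inter_subset_right) measureReal_nonneg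
  have hGint : Integrable (fun x => G (q x)) μ :=
    .of_bound (hGq.mono (sAlg_le hq) le_rfl).aestronglyMeasurable 1 (.of_forall fun x => hG _)
  have hAint : Integrable (A.indicator fun _ => (1 : ℝ)) μ := (integrable_const _).indicator hA
  have hpiece : ∀ l, ∫ x in q ⁻¹' {l}, G (q x) ∂μ
      = ∫ x in q ⁻¹' {l}, A.indicator (fun _ => (1 : ℝ)) x ∂μ := fun l => by
    rw [setIntegral_comp_preimage_singleton μ hq, setIntegral_indicator hA, setIntegral_const,
      smul_eq_mul, mul_one, Set.inter_comm]
    rcases eq_or_ne (μ.real (q ⁻¹' {l})) 0 with h0 | h0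
    · rw [h0, zero_mul, eq_comm]
      exact measureReal_mono_null Set.inter_subset_right h0
    · exact mul_div_cancel₀ _ h0
  refine (ae_eq_condExp_of_forall_setIntegral_eq (sAlg_le hq) hAint
    (fun _ _ _ => hGint.integrableOn) ?_ hGq.aestronglyMeasurable).symm
  rintro _ ⟨S, -, rfl⟩ -
  have hS : q ⁻¹' S = ⋃ l : S, q ⁻¹' {(l : L)} := by
    ext x; simp
  have hd : Pairwise (Function.onFun Disjoint fun l : S => q ⁻¹' {(l : L)}) :=
    fun l l' h => (Set.disjoint_singleton.mpr (Subtype.coe_ne_coe.mpr h)).preimage q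
  rw [hS, integral_iUnion (fun l => hq (measurableSet_singleton _)) hd hGint.integrableOn,
    integral_iUnion (fun l => hq (measurableSet_singleton _)) hd hAint.integrableOn]
  exact tsum_congr fun l => hpiece l

lemma HpartC_sAlg_eq_Hcond [MeasurableSpace K] [MeasurableSingletonClass K] [Countable K]
    [MeasurableSpace L] [MeasurableSingletonClass L] [Countable L]
    (μ : Measure X) [IsProbabilityMeasure μ] {p : X → K} {q : X → L} (hp : Measurable p)
    (hq : Measurable q) :
    HpartC μ p (sAlg q) = Hcond μ p q := by
  have hae : ∀ᵐ x ∂μ, ∀ k, μ[(p ⁻¹' {k}).indicator (fun _ => (1 : ℝ)) | sAlg q] x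
      = μ.real (p ⁻¹' {k} ∩ q ⁻¹' {q x}) / μ.real (q ⁻¹' {q x}) :=
    ae_all_iff.mpr fun k => condExp_indicator_sAlg μ hq (hp (measurableSet_singleton k))
  let F : K × L → ℝ≥0∞ := fun kl =>
    ENNReal.ofReal (-Real.log (μ.real (p ⁻¹' {kl.1} ∩ q ⁻¹' {kl.2}) / μ.real (q ⁻¹' {kl.2})))
  calc HpartC μ p (sAlg q) = ∫⁻ x, F (pjoin p q x) ∂μ := by
        refine lintegral_congr_ae ?_
        filter_upwards [hae] with x hx
        rw [atomOf, hx]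
        rfl
    _ = Hcond μ p q := by
        rw [lintegral_comp_eq_tsum μ (hp.pjoin hq)]
        refine tsum_congr fun kl => ?_
        rw [pjoin_preimage_singleton]
        exact mul_ofReal_neg_log_div (measure_mono Set.inter_subset_right) (measure_ne_top μ _)

end Entropy

lemma FF_sub_le {r : ℕ} (hr : 1 ≤ r) {X : Type*} [MeasurableSpace X] {K L : Type*}
    [MeasurableSpace K] [MeasurableSingletonClass K] [Countable K]
    [MeasurableSpace L] [MeasurableSingletonClass L] [Countable L]
    (μ : Measure X) [IsProbabilityMeasure μ] (T : FG r → X → X)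
    (hT : ∀ g, MeasurePreserving (T g) μ μ) {α : X → K} {β : X → L}
    (hα : Measurable α) (hβ : Measurable β) (hHα : Hpart μ α ≠ ⊤) (hHβ : Hpart μ β ≠ ⊤) :
    FF T μ α - FF T μ β
      ≤ 2 * r * (Hcond μ α β).toReal + (2 * r - 1) * (Hcond μ β α).toReal := by
  have hαβ : Hcond μ α β ≠ ⊤ := ne_top_of_le_ne_top hHα (Hcond_le_Hpart μ α hβ)
  have hβα : Hcond μ β α ≠ ⊤ := ne_top_of_le_ne_top hHβ (Hcond_le_Hpart μ β hα)
  have hbase : (Hpart μ β).toReal ≤ (Hpart μ α).toReal + (Hcond μ β α).toReal :=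
    ENNReal.toReal_le_add (Hpart_le_add_Hcond μ hβ hα) hHα hβα
  have hgen : ∀ i : Fin r, (Hpart μ (pjoin α (pull T (FreeGroup.of i) α))).toReal
      ≤ (Hpart μ (pjoin β (pull T (FreeGroup.of i) β))).toReal + 2 * (Hcond μ α β).toReal :=
    fun i => by
      have h := ENNReal.toReal_le_add (Hpart_pjoin_comp_le μ (hT (FreeGroup.of i)) hα hβ hHβ)
        (Hpart_pjoin_comp_ne_top μ (hT (FreeGroup.of i)) hβ hHβ)
        (ENNReal.mul_ne_top ENNReal.ofNat_ne_top hαβ)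
      rwa [ENNReal.toReal_mul, ENNReal.toReal_ofNat] at h
  have hsum := Finset.sum_le_sum fun i (_ : i ∈ Finset.univ) => hgen i
  rw [Finset.sum_add_distrib, Finset.sum_const, Finset.card_univ, Fintype.card_fin,
    nsmul_eq_mul] at hsum
  have hr' : (1 : ℝ) ≤ r := by exact_mod_cast hr
  have hH := mul_le_mul_of_nonneg_left hbase (by linarith : (0 : ℝ) ≤ 2 * r - 1)
  unfold FF
  linarith

theorem stmt_19_general {r : ℕ} (hr : 1 ≤ r) {X : Type*} [MeasurableSpace X]
    (μ : Measure X) [IsProbabilityMeasure μ]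
    (T : FG r → X → X)
    (hTmp : ∀ g : FG r, MeasurePreserving (T g) μ μ)
    (α β : X → ℕ) (hαm : Measurable α) (hβm : Measurable β)
    (hHα : Hpart μ α < ⊤) (hHβ : Hpart μ β < ⊤) :
    |FF T μ α - FF T μ β| ≤ (4 * (r : ℝ) - 1) * rohlinDist μ α β := by
  have hαβ := FF_sub_le hr μ T hTmp hαm hβm hHα.ne hHβ.ne
  have hβα := FF_sub_le hr μ T hTmp hβm hαm hHβ.ne hHα.ne
  have hr' : (1 : ℝ) ≤ r := by exact_mod_cast hr
  have h₁ : 0 ≤ (Hcond μ α β).toReal := ENNReal.toReal_nonneg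
  have h₂ : 0 ≤ (Hcond μ β α).toReal := ENNReal.toReal_nonneg
  rw [rohlinDist, HpartC_sAlg_eq_Hcond μ hαm hβm, HpartC_sAlg_eq_Hcond μ hβm hαm, abs_sub_le_iff]
  constructor <;> nlinarith

/-- `|F(T,α) − F(T,β)| ≤ (4r−1)·d(α,β)` where `d` is the Rohlin
distance. -/
theorem stmt_19 {r : ℕ} (hr : 1 ≤ r) {X : Type*} [MeasurableSpace X] [StandardBorelSpace X]
    (μ : Measure X) [IsProbabilityMeasure μ]
    (T : FG r → X → X) (hT1 : T 1 = id)
    (hTmul : ∀ g h : FG r, T (g * h) = T g ∘ T h)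
    (hTmp : ∀ g : FG r, MeasurePreserving (T g) μ μ)
    (α β : X → ℕ) (hαm : Measurable α) (hβm : Measurable β)
    (hHα : Hpart μ α < ⊤) (hHβ : Hpart μ β < ⊤) :
    |FF T μ α - FF T μ β| ≤ (4 * (r : ℝ) - 1) * rohlinDist μ α β :=
  stmt_19_general hr μ T hTmp α β hαm hβm hHα hHβ

end

end Bowen
end
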